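/- arXiv:0903.4425 — 8 statements merged into one kernel-verified Lean document; each statement's English description precedes it below -/
import Mathlib

section
/- In the Buffon needle problem, if a needle of length l is dropped uniformly at random onto a plane ruled with parallel lines a distance d apart, with l ≤ d, then the probability that the needle crosses a line equals 2l/(πd). More precisely, if the needle's center distance to the nearest line X is uniform on [0, d/2] and its angle Θ to the lines is uniform on [0, π), independent of X, then the probability that X ≤ (l/2)·sin Θ equals 2l/(πd). -/
/-!
Integrating over the angle first, the conditional probability of a crossing at angle `θ` is the
length `(l/2) sin θ` of the admissible interval for `X` divided by `d/2`; this length never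
exceeds `d/2` because `l ≤ d`. Since `∫₀^π sin θ dθ = 2`, the probability is
`(2/d) · (1/π) · (l/2) · 2 = 2l/(πd)`.
-/

open MeasureTheory Real Set

theorem MeasureTheory.Measure.prod_setOf_fst_le {β : Type*} [MeasurableSpace β] {μ : Measure ℝ}
    {ν : Measure β} [SFinite μ] [SFinite ν] {f : β → ℝ} (hf : Measurable f) :
    μ.prod ν {p : ℝ × β | p.1 ≤ f p.2} = ∫⁻ y, μ (Iic (f y)) ∂ν :=
  Measure.prod_apply_symm (measurableSet_le measurable_fst (hf.comp measurable_snd))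

theorem Real.volume_restrict_Icc_Iic {a b t : ℝ} (htb : t ≤ b) :
    volume.restrict (Icc a b) (Iic t) = ENNReal.ofReal (t - a) := by
  have hinter : Iic t ∩ Icc a b = Icc a t := by
    ext x
    simp only [mem_inter_iff, mem_Iic, mem_Icc]
    constructor
    · rintro ⟨hxt, hax, -⟩
      exact ⟨hax, hxt⟩
    · rintro ⟨hax, hxt⟩
      exact ⟨hxt, hax, hxt.trans htb⟩
  rw [Measure.restrict_apply measurableSet_Iic, hinter, Real.volume_Icc]

theorem Real.lintegral_Ico_zero_pi_ofReal_sin :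
    ∫⁻ θ in Ico 0 π, ENNReal.ofReal (sin θ) = 2 := by
  have hsin_nonneg : 0 ≤ᵐ[volume.restrict (Ico 0 π)] sin :=
    (ae_restrict_mem measurableSet_Ico).mono fun θ hθ =>
      sin_nonneg_of_nonneg_of_le_pi hθ.1 hθ.2.le
  have hsin_integrable : IntegrableOn sin (Ico 0 π) :=
    continuous_sin.integrableOn_Icc.mono_set Ico_subset_Icc_self
  rw [← ofReal_integral_eq_lintegral_ofReal hsin_integrable hsin_nonneg,
    setIntegral_congr_set Ico_ae_eq_Ioc, ← intervalIntegral.integral_of_le pi_pos.le,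
    integral_sin]
  norm_num

/-- Buffon's needle: with center distance `X` uniform on `[0, d/2]` and angle `Θ`
uniform on `[0, π)`, independent, the probability that `X ≤ (l/2)·sin Θ`
equals `2l/(πd)`, provided `0 < l ≤ d`. -/
theorem buffon_needle (l d : ℝ) (hl : 0 < l) (hld : l ≤ d) :
    Measure.prod
      ((ENNReal.ofReal (d / 2))⁻¹ • volume.restrict (Set.Icc (0 : ℝ) (d / 2)))
      ((ENNReal.ofReal π)⁻¹ • volume.restrict (Set.Ico (0 : ℝ) π))
      {p : ℝ × ℝ | p.1 ≤ l / 2 * Real.sin p.2}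
      = ENNReal.ofReal (2 * l / (π * d)) := by
  have hd : 0 < d := hl.trans_le hld
  have hcrossing : ∀ θ, volume.restrict (Icc 0 (d / 2)) (Iic (l / 2 * sin θ))
      = ENNReal.ofReal (l / 2) * ENNReal.ofReal (sin θ) := fun θ => by
    rw [Real.volume_restrict_Icc_Iic (by nlinarith [sin_le_one θ]), sub_zero,
      ENNReal.ofReal_mul (by positivity)]
  calc _ = (ENNReal.ofReal (d / 2))⁻¹ * (ENNReal.ofReal π)⁻¹ *
        ∫⁻ θ in Ico 0 π, volume.restrict (Icc 0 (d / 2)) (Iic (l / 2 * sin θ)) := by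
        rw [Measure.prod_smul_left, Measure.prod_smul_right, Measure.smul_apply,
          Measure.smul_apply, smul_smul, smul_eq_mul,
          Measure.prod_setOf_fst_le (f := fun θ => l / 2 * sin θ) (by fun_prop)]
    _ = (ENNReal.ofReal (d / 2))⁻¹ * (ENNReal.ofReal π)⁻¹ *
          (ENNReal.ofReal (l / 2) * 2) := by
        rw [lintegral_congr hcrossing, lintegral_const_mul _ (by fun_prop),
          Real.lintegral_Ico_zero_pi_ofReal_sin]
    _ = ENNReal.ofReal (2 * l / (π * d)) := by
        rw [← ENNReal.ofReal_inv_of_pos (by positivity), ← ENNReal.ofReal_inv_of_pos pi_pos,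
          ← ENNReal.ofReal_ofNat 2, ← ENNReal.ofReal_mul (by positivity),
          ← ENNReal.ofReal_mul (by positivity), ← ENNReal.ofReal_mul (by positivity)]
        congr 1
        field_simp
end

section
/- Ergodic theorem for finite Markov chains (Markov, as studied by Hostinský and Hadamard): if P is a row-stochastic n×n matrix with all entries strictly positive, then there exists a unique probability row vector π with πP = π, and for every probability row vector μ, the sequence μPᵏ converges to π as k → ∞. -/
open Filter

section MarkovAux

variable {n : ℕ} [NeZero n] (P : Matrix (Fin n) (Fin n) ℝ)
set_option linter.unusedSectionVars false

private lemma markov_pow_nonneg (hpos : ∀ i j, 0 < P i j) :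
    ∀ k i j, 0 ≤ (P ^ k) i j := by
  intro k
  induction k with
  | zero =>
    intro i j
    by_cases h : i = j <;> simp [Matrix.one_apply, h]
  | succ k ih =>
    intro i j
    rw [pow_succ, Matrix.mul_apply]
    exact Finset.sum_nonneg fun l _ => mul_nonneg (ih i l) (hpos l j).le

private lemma markov_pow_rowsum (hrow : ∀ i, ∑ j, P i j = 1) :
    ∀ k i, ∑ j, (P ^ k) i j = 1 := by
  intro k
  induction k with
  | zero => intro i; simp [Matrix.one_apply]
  | succ k ih =>
    intro i
    rw [pow_succ]
    simp only [Matrix.mul_apply]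
    rw [Finset.sum_comm]
    simp only [← Finset.mul_sum, hrow]
    simpa using ih i

/-- lower bound for one step applied to a vector -/
private lemma markov_step_lower (hrow : ∀ i, ∑ j, P i j = 1)
    (hpos : ∀ i j, 0 < P i j) {δ : ℝ} (hδ : ∀ i j, δ ≤ P i j)
    (v : Fin n → ℝ) (i : Fin n) :
    Finset.univ.inf' Finset.univ_nonempty v
      + δ * (Finset.univ.sup' Finset.univ_nonempty v
          - Finset.univ.inf' Finset.univ_nonempty v) ≤ ∑ l, P i l * v l := by
  set m := Finset.univ.inf' Finset.univ_nonempty v with hm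
  set M := Finset.univ.sup' Finset.univ_nonempty v with hM
  obtain ⟨l1, -, hl1⟩ := Finset.exists_mem_eq_sup' Finset.univ_nonempty v
  have hvm : ∀ l, m ≤ v l := fun l => Finset.inf'_le _ (Finset.mem_univ l)
  have hsplit : ∑ l, P i l * v l = m + ∑ l, P i l * (v l - m) := by
    have : ∑ l, P i l * (v l - m) = ∑ l, P i l * v l - (∑ l, P i l) * m := by
      rw [Finset.sum_mul, ← Finset.sum_sub_distrib]
      congr 1; ext l; ring
    rw [this, hrow]; ring
  have hterm : δ * (M - m) ≤ ∑ l, P i l * (v l - m) := by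
    have h1 : P i l1 * (v l1 - m) ≤ ∑ l, P i l * (v l - m) :=
      Finset.single_le_sum
        (fun l _ => mul_nonneg (hpos i l).le (sub_nonneg.2 (hvm l)))
        (Finset.mem_univ l1)
    have h2 : δ * (M - m) ≤ P i l1 * (v l1 - m) := by
      rw [hM, hl1]
      exact mul_le_mul_of_nonneg_right (hδ i l1) (sub_nonneg.2 (hvm l1))
    linarith
  linarith

/-- upper bound for one step applied to a vector -/
private lemma markov_step_upper (hrow : ∀ i, ∑ j, P i j = 1)
    (hpos : ∀ i j, 0 < P i j) {δ : ℝ} (hδ : ∀ i j, δ ≤ P i j)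
    (v : Fin n → ℝ) (i : Fin n) :
    ∑ l, P i l * v l ≤ Finset.univ.sup' Finset.univ_nonempty v
      - δ * (Finset.univ.sup' Finset.univ_nonempty v
          - Finset.univ.inf' Finset.univ_nonempty v) := by
  set m := Finset.univ.inf' Finset.univ_nonempty v with hm
  set M := Finset.univ.sup' Finset.univ_nonempty v with hM
  obtain ⟨l0, -, hl0⟩ := Finset.exists_mem_eq_inf' Finset.univ_nonempty v
  have hvM : ∀ l, v l ≤ M := fun l => Finset.le_sup' _ (Finset.mem_univ l)
  have hsplit : ∑ l, P i l * v l = M - ∑ l, P i l * (M - v l) := by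
    have : ∑ l, P i l * (M - v l) = (∑ l, P i l) * M - ∑ l, P i l * v l := by
      rw [Finset.sum_mul, ← Finset.sum_sub_distrib]
      congr 1; ext l; ring
    rw [this, hrow]; ring
  have hterm : δ * (M - m) ≤ ∑ l, P i l * (M - v l) := by
    have h1 : P i l0 * (M - v l0) ≤ ∑ l, P i l * (M - v l) :=
      Finset.single_le_sum
        (fun l _ => mul_nonneg (hpos i l).le (sub_nonneg.2 (hvM l)))
        (Finset.mem_univ l0)
    have h2 : δ * (M - m) ≤ P i l0 * (M - v l0) := by
      rw [hm, hl0]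
      exact mul_le_mul_of_nonneg_right (hδ i l0) (sub_nonneg.2 (hvM l0))
    linarith
  linarith

end MarkovAux

/-- Ergodic theorem for finite Markov chains: a strictly positive row-stochastic
matrix has a unique stationary probability vector, and every probability vector
converges to it under iteration. -/
theorem markov_ergodic (n : ℕ) (hn : 1 ≤ n) (P : Matrix (Fin n) (Fin n) ℝ)
    (hpos : ∀ i j, 0 < P i j) (hrow : ∀ i, ∑ j, P i j = 1) :
    ∃ pi : Fin n → ℝ,
      ((∀ i, 0 ≤ pi i) ∧ ∑ i, pi i = 1 ∧ ∀ j, ∑ i, pi i * P i j = pi j) ∧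
      (∀ pi' : Fin n → ℝ,
        ((∀ i, 0 ≤ pi' i) ∧ ∑ i, pi' i = 1 ∧ ∀ j, ∑ i, pi' i * P i j = pi' j) →
        pi' = pi) ∧
      ∀ μ : Fin n → ℝ, (∀ i, 0 ≤ μ i) → (∑ i, μ i = 1) →
        ∀ j, Tendsto (fun k => ∑ i, μ i * (P ^ k) i j) atTop (nhds (pi j)) := by
  haveI : NeZero n := ⟨by omega⟩
  -- minimal entry of P
  set δ : ℝ := Finset.univ.inf' Finset.univ_nonempty
    (fun p : Fin n × Fin n => P p.1 p.2) with hδdef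
  have hδle : ∀ i j, δ ≤ P i j := fun i j =>
    Finset.inf'_le _ (Finset.mem_univ (i, j))
  have hδpos : 0 < δ := by
    obtain ⟨p, -, hp⟩ := Finset.exists_mem_eq_inf' (Finset.univ_nonempty
      (α := Fin n × Fin n)) (fun p : Fin n × Fin n => P p.1 p.2)
    rw [hδdef, hp]; exact hpos p.1 p.2
  -- column-wise min and max of P^k
  set m : ℕ → Fin n → ℝ := fun k j =>
    Finset.univ.inf' Finset.univ_nonempty (fun i => (P ^ k) i j) with hmdef
  set M : ℕ → Fin n → ℝ := fun k j =>
    Finset.univ.sup' Finset.univ_nonempty (fun i => (P ^ k) i j) with hMdef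
  have hmle : ∀ k j i, m k j ≤ (P ^ k) i j := fun k j i => by
    simp only [hmdef]
    exact Finset.inf'_le (fun i => (P ^ k) i j) (Finset.mem_univ i)
  have hMge : ∀ k j i, (P ^ k) i j ≤ M k j := fun k j i => by
    simp only [hMdef]
    exact Finset.le_sup' (fun i => (P ^ k) i j) (Finset.mem_univ i)
  have hmM : ∀ k j, m k j ≤ M k j := fun k j =>
    le_trans (hmle k j ⟨0, hn⟩) (hMge k j ⟨0, hn⟩)
  have hpowsucc : ∀ k i j, (P ^ (k + 1)) i j = ∑ l, P i l * (P ^ k) l j := by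
    intro k i j
    rw [pow_succ']
    exact Matrix.mul_apply
  -- one-step bounds for m and M
  have hmstep : ∀ k j, m k j + δ * (M k j - m k j) ≤ m (k + 1) j := by
    intro k j
    apply Finset.le_inf'
    intro i _
    rw [hpowsucc k i j]
    exact markov_step_lower P hrow hpos hδle (fun l => (P ^ k) l j) i
  have hMstep : ∀ k j, M (k + 1) j ≤ M k j - δ * (M k j - m k j) := by
    intro k j
    apply Finset.sup'_le
    intro i _
    rw [hpowsucc k i j]
    exact markov_step_upper P hrow hpos hδle (fun l => (P ^ k) l j) i
  have hmmono : ∀ j, Monotone fun k => m k j := by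
    intro j
    apply monotone_nat_of_le_succ
    intro k
    have := hmstep k j
    have h2 : 0 ≤ δ * (M k j - m k j) := mul_nonneg hδpos.le (by linarith [hmM k j])
    linarith
  -- contraction of the gap
  set c : ℝ := max (1 - 2 * δ) 0 with hcdef
  have hc0 : 0 ≤ c := le_max_right _ _
  have hc1 : c < 1 := by
    rw [hcdef]
    apply max_lt <;> linarith
  have hgap : ∀ k j, M k j - m k j ≤ c ^ k * (M 0 j - m 0 j) := by
    intro k j
    induction k with
    | zero => simp
    | succ k ih =>
      have h1 : M (k + 1) j - m (k + 1) j ≤ (1 - 2 * δ) * (M k j - m k j) := by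
        have := hmstep k j
        have := hMstep k j
        linarith
      have h2 : (1 - 2 * δ) * (M k j - m k j) ≤ c * (M k j - m k j) :=
        mul_le_mul_of_nonneg_right (le_max_left _ _) (by linarith [hmM k j])
      calc M (k + 1) j - m (k + 1) j ≤ c * (M k j - m k j) := le_trans h1 h2
        _ ≤ c * (c ^ k * (M 0 j - m 0 j)) := by
            exact mul_le_mul_of_nonneg_left ih hc0
        _ = c ^ (k + 1) * (M 0 j - m 0 j) := by ring
  have hgap0 : ∀ j, Tendsto (fun k => M k j - m k j) atTop (nhds 0) := by
    intro j
    have hpow : Tendsto (fun k => c ^ k * (M 0 j - m 0 j)) atTop (nhds 0) := by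
      have := (tendsto_pow_atTop_nhds_zero_of_lt_one hc0 hc1).mul_const (M 0 j - m 0 j)
      simpa using this
    exact squeeze_zero (fun k => by linarith [hmM k j]) (fun k => hgap k j) hpow
  -- m is bounded above, so converges; define pi as the limit
  have hP0 : ∀ k i j, 0 ≤ (P ^ k) i j := markov_pow_nonneg P hpos
  have hPsum : ∀ k i, ∑ j, (P ^ k) i j = 1 := markov_pow_rowsum P hrow
  have hP1 : ∀ k i j, (P ^ k) i j ≤ 1 := by
    intro k i j
    calc (P ^ k) i j ≤ ∑ j', (P ^ k) i j' :=
          Finset.single_le_sum (fun l _ => hP0 k i l) (Finset.mem_univ j)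
      _ = 1 := hPsum k i
  have hbdd : ∀ j, BddAbove (Set.range fun k => m k j) := by
    intro j
    exact ⟨1, by rintro x ⟨k, rfl⟩; exact le_trans (hmle k j ⟨0, hn⟩) (hP1 k ⟨0, hn⟩ j)⟩
  set pi : Fin n → ℝ := fun j => ⨆ k, m k j with hpidef
  have hmconv : ∀ j, Tendsto (fun k => m k j) atTop (nhds (pi j)) := fun j =>
    tendsto_atTop_ciSup (hmmono j) (hbdd j)
  -- entrywise convergence of P^k to pi (rows)
  have hentry : ∀ i j, Tendsto (fun k => (P ^ k) i j) atTop (nhds (pi j)) := by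
    intro i j
    have hupper : Tendsto (fun k => m k j + (M k j - m k j)) atTop (nhds (pi j)) := by
      have := (hmconv j).add (hgap0 j)
      simpa using this
    exact tendsto_of_tendsto_of_tendsto_of_le_of_le (hmconv j) hupper
      (fun k => hmle k j i) (fun k => by linarith [hMge k j i])
  -- convergence for arbitrary probability vectors
  have hconv : ∀ μ : Fin n → ℝ, (∑ i, μ i = 1) →
      ∀ j, Tendsto (fun k => ∑ i, μ i * (P ^ k) i j) atTop (nhds (pi j)) := by
    intro μ hμ1 j
    have : Tendsto (fun k => ∑ i, μ i * (P ^ k) i j) atTop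
        (nhds (∑ i, μ i * pi j)) := by
      apply tendsto_finset_sum
      intro i _
      exact (hentry i j).const_mul (μ i)
    have heq : ∑ i, μ i * pi j = pi j := by
      rw [← Finset.sum_mul, hμ1, one_mul]
    rwa [heq] at this
  have i0 : Fin n := ⟨0, hn⟩
  -- pi is nonneg
  have hpinonneg : ∀ j, 0 ≤ pi j := by
    intro j
    exact ge_of_tendsto' (hentry i0 j) (fun k => hP0 k i0 j)
  -- pi sums to 1
  have hpisum : ∑ j, pi j = 1 := by
    have h1 : Tendsto (fun k => ∑ j, (P ^ k) i0 j) atTop (nhds (∑ j, pi j)) :=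
      tendsto_finset_sum _ (fun j _ => hentry i0 j)
    have h2 : Tendsto (fun k => ∑ j, (P ^ k) i0 j) atTop (nhds 1) := by
      simp only [hPsum]
      exact tendsto_const_nhds
    exact tendsto_nhds_unique h1 h2
  -- stationarity
  have hstat : ∀ j, ∑ i, pi i * P i j = pi j := by
    intro j
    have h1 : Tendsto (fun k => (P ^ (k + 1)) i0 j) atTop (nhds (pi j)) :=
      (hentry i0 j).comp (tendsto_add_atTop_nat 1)
    have h2 : Tendsto (fun k => (P ^ (k + 1)) i0 j) atTop
        (nhds (∑ l, pi l * P l j)) := by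
      have heq : ∀ k, (P ^ (k + 1)) i0 j = ∑ l, (P ^ k) i0 l * P l j := by
        intro k
        rw [pow_succ]
        exact Matrix.mul_apply
      simp only [heq]
      apply tendsto_finset_sum
      intro l _
      exact (hentry i0 l).mul_const (P l j)
    exact (tendsto_nhds_unique h2 h1).symm ▸ tendsto_nhds_unique h1 h2 ▸ rfl
  refine ⟨pi, ⟨hpinonneg, hpisum, hstat⟩, ?_, fun μ _ hμ1 j => hconv μ hμ1 j⟩
  -- uniqueness
  intro pi' ⟨hpi'0, hpi'1, hpi'stat⟩
  have hstatk : ∀ k j, ∑ i, pi' i * (P ^ k) i j = pi' j := by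
    intro k
    induction k with
    | zero =>
      intro j
      simp [Matrix.one_apply]
    | succ k ih =>
      intro j
      have heq : ∀ i, (P ^ (k + 1)) i j = ∑ l, (P ^ k) i l * P l j := by
        intro i
        rw [pow_succ]
        exact Matrix.mul_apply
      simp only [heq]
      calc ∑ i, pi' i * ∑ l, (P ^ k) i l * P l j
          = ∑ i, ∑ l, pi' i * (P ^ k) i l * P l j := by
            simp only [Finset.mul_sum, mul_assoc]
        _ = ∑ l, ∑ i, pi' i * (P ^ k) i l * P l j := Finset.sum_comm
        _ = ∑ l, (∑ i, pi' i * (P ^ k) i l) * P l j := by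
            simp only [Finset.sum_mul]
        _ = ∑ l, pi' l * P l j := by simp only [ih]
        _ = pi' j := hpi'stat j
  funext j
  have h1 : Tendsto (fun k => ∑ i, pi' i * (P ^ k) i j) atTop (nhds (pi j)) :=
    hconv pi' hpi'1 j
  have h2 : Tendsto (fun k => ∑ i, pi' i * (P ^ k) i j) atTop (nhds (pi' j)) := by
    simp only [hstatk]
    exact tendsto_const_nhds
  exact tendsto_nhds_unique h2 h1
end

section
/- Contraction property of positive stochastic matrices: if P is an n×n row-stochastic matrix with all entries at least ε > 0, then for any two probability row vectors μ and ν, the total variation distance satisfies ‖μP − νP‖₁ ≤ (1 − nε)·‖μ − ν‖₁. -/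
/-- Dobrushin contraction for a stochastic matrix with entries bounded below by ε. -/
theorem dobrushin_contraction (n : ℕ) (hn : 1 ≤ n) (ε : ℝ) (hε : 0 < ε)
    (hnε : (n : ℝ) * ε ≤ 1) (P : Matrix (Fin n) (Fin n) ℝ)
    (hij : ∀ i j, ε ≤ P i j) (hrow : ∀ i, ∑ j, P i j = 1)
    (μ ν : Fin n → ℝ)
    (hμ0 : ∀ i, 0 ≤ μ i) (hμ1 : ∑ i, μ i = 1)
    (hν0 : ∀ i, 0 ≤ ν i) (hν1 : ∑ i, ν i = 1) :
    ∑ j, |(∑ i, μ i * P i j) - (∑ i, ν i * P i j)|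
      ≤ (1 - (n : ℝ) * ε) * ∑ i, |μ i - ν i| := by
  set d : Fin n → ℝ := fun i => μ i - ν i with hd
  have hdsum : ∑ i, d i = 0 := by
    simp [hd, Finset.sum_sub_distrib, hμ1, hν1]
  have hde : ∑ i, d i * ε = 0 := by rw [← Finset.sum_mul, hdsum, zero_mul]
  calc ∑ j, |(∑ i, μ i * P i j) - (∑ i, ν i * P i j)|
      = ∑ j, |∑ i, d i * (P i j - ε)| := by
        refine Finset.sum_congr rfl fun j _ => ?_
        congr 1
        simp only [hd, mul_sub, sub_mul, Finset.sum_sub_distrib, ← Finset.sum_mul,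
          hdsum, hμ1, hν1]
        ring
    _ ≤ ∑ j, ∑ i, |d i| * (P i j - ε) := by
        refine Finset.sum_le_sum fun j _ => ?_
        refine (Finset.abs_sum_le_sum_abs _ _).trans (Finset.sum_le_sum fun i _ => ?_)
        rw [abs_mul, abs_of_nonneg (sub_nonneg.mpr (hij i j))]
    _ = ∑ i, |d i| * (1 - (n : ℝ) * ε) := by
        rw [Finset.sum_comm]
        refine Finset.sum_congr rfl fun i _ => ?_
        rw [← Finset.mul_sum, Finset.sum_sub_distrib, hrow i]
        simp [mul_comm]
    _ = (1 - (n : ℝ) * ε) * ∑ i, |μ i - ν i| := by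
        rw [Finset.mul_sum]
        exact Finset.sum_congr rfl fun i _ => by rw [mul_comm]
end

section
/- Hadamard's card shuffling convergence: let G be a finite group and ν a probability measure on G whose support generates G and which is not supported on a coset of a proper normal subgroup (e.g. ν(g) > 0 for all g ∈ G). If ν(g) > 0 for all g, then the k-fold convolution ν^{*k} converges to the uniform distribution on G as k → ∞. -/
open Filter Finset

/-- Convolution of two functions on a finite group. -/
def groupConv {G : Type*} [Group G] [Fintype G] (μ ν : G → ℝ) : G → ℝ :=
  fun g => ∑ h, μ h * ν (h⁻¹ * g)

/-- k-fold convolution power, with the 0-th power the point mass at the identity. -/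
def groupConvPow {G : Type*} [Group G] [Fintype G] [DecidableEq G] (ν : G → ℝ) : ℕ → G → ℝ
  | 0 => fun g => if g = 1 then 1 else 0
  | k + 1 => groupConv (groupConvPow ν k) ν

/-!
Doeblin's contraction argument. If every weight of ν is at least `ε > 0`, each value of `μ * ν`
is an average of the values of `μ` giving weight at least `ε` to the place where `μ` is smallest,
so the spread `max - min` of `μ * ν` is at most `(1 - ε)` times that of `μ`. Hence the spread of
`ν^{*k}` decays geometrically, and since the mean of `ν^{*k}` is always `1 / |G|` and lies between
its minimum and maximum, every value of `ν^{*k}` tends to `1 / |G|`.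
-/

section Spread

variable {ι : Type*} [Fintype ι] [Nonempty ι]

noncomputable def spread (f : ι → ℝ) : ℝ :=
  univ.sup' univ_nonempty f - univ.inf' univ_nonempty f

lemma le_sup'_univ (f : ι → ℝ) (i : ι) : f i ≤ univ.sup' univ_nonempty f :=
  Finset.le_sup' f (mem_univ i)

lemma inf'_univ_le (f : ι → ℝ) (i : ι) : univ.inf' univ_nonempty f ≤ f i :=
  Finset.inf'_le f (mem_univ i)

lemma sum_mul_le_sup'_sub_spread {f w : ι → ℝ} {ε : ℝ} (hε : 0 ≤ ε) (hw : ∀ i, ε ≤ w i)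
    (hsum : ∑ i, w i = 1) :
    ∑ i, f i * w i ≤ univ.sup' univ_nonempty f - ε * spread f := by
  set M := univ.sup' univ_nonempty f
  obtain ⟨i₀, -, hi₀⟩ := exists_mem_eq_inf' univ_nonempty f
  have hdefect : (M - f i₀) * w i₀ ≤ ∑ i, (M - f i) * w i :=
    single_le_sum (fun i _ => mul_nonneg (sub_nonneg.2 (le_sup'_univ f i)) (hε.trans (hw i)))
      (mem_univ i₀)
  have hexpand : ∑ i, (M - f i) * w i = M - ∑ i, f i * w i := by
    simp only [sub_mul, sum_sub_distrib, ← mul_sum, hsum, mul_one]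
  have hgap : ε * (M - f i₀) ≤ w i₀ * (M - f i₀) :=
    mul_le_mul_of_nonneg_right (hw i₀) (sub_nonneg.2 (le_sup'_univ f i₀))
  rw [spread, hi₀]
  linarith

lemma inf'_le_sum_mul {f w : ι → ℝ} (hw : ∀ i, 0 ≤ w i) (hsum : ∑ i, w i = 1) :
    univ.inf' univ_nonempty f ≤ ∑ i, f i * w i :=
  calc univ.inf' univ_nonempty f = ∑ i, univ.inf' univ_nonempty f * w i := by
        rw [← mul_sum, hsum, mul_one]
    _ ≤ ∑ i, f i * w i :=
        sum_le_sum fun i _ => mul_le_mul_of_nonneg_right (inf'_univ_le f i) (hw i)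

lemma abs_sub_mean_le_spread (f : ι → ℝ) (i : ι) :
    |f i - (∑ j, f j) / Fintype.card ι| ≤ spread f := by
  have hcard : (0 : ℝ) < Fintype.card ι := by exact_mod_cast Fintype.card_pos
  have hw : ∑ _j : ι, (Fintype.card ι : ℝ)⁻¹ = 1 := by
    rw [sum_const, card_univ, nsmul_eq_mul, mul_inv_cancel₀ hcard.ne']
  have hmean : (∑ j, f j) / Fintype.card ι = ∑ j, f j * (Fintype.card ι : ℝ)⁻¹ := by
    rw [div_eq_mul_inv, sum_mul]
  have hupper := sum_mul_le_sup'_sub_spread (f := f) le_rfl (fun _ => inv_nonneg.2 hcard.le) hw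
  have hlower := inf'_le_sum_mul (f := f) (fun _ => inv_nonneg.2 hcard.le) hw
  have := le_sup'_univ f i
  have := inf'_univ_le f i
  rw [hmean, abs_le, spread]
  constructor <;> linarith

end Spread

section Convolution

variable {G : Type*} [Group G] [Fintype G]

lemma sum_apply_inv_mul (ν : G → ℝ) (g : G) : ∑ h, ν (h⁻¹ * g) = ∑ x, ν x :=
  Fintype.sum_equiv ((Equiv.inv G).trans (Equiv.mulRight g)) _ _ fun _ => rfl

lemma sum_groupConv (μ ν : G → ℝ) : ∑ g, groupConv μ ν g = (∑ h, μ h) * ∑ x, ν x := by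
  simp only [groupConv]
  rw [sum_comm, sum_mul]
  refine sum_congr rfl fun h _ => ?_
  rw [← mul_sum]
  congr 1
  exact Fintype.sum_equiv (Equiv.mulLeft h⁻¹) _ _ fun _ => rfl

lemma spread_groupConv_le (μ : G → ℝ) {ν : G → ℝ} {ε : ℝ} (hε : 0 ≤ ε) (hν : ∀ x, ε ≤ ν x)
    (hsum : ∑ x, ν x = 1) : spread (groupConv μ ν) ≤ (1 - ε) * spread μ := by
  have hw : ∀ g, ∑ h, ν (h⁻¹ * g) = 1 := fun g => (sum_apply_inv_mul ν g).trans hsum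
  have hsup : univ.sup' univ_nonempty (groupConv μ ν) ≤
      univ.sup' univ_nonempty μ - ε * spread μ :=
    sup'_le _ _ fun g _ => sum_mul_le_sup'_sub_spread hε (fun h => hν _) (hw g)
  have hinf : univ.inf' univ_nonempty μ ≤ univ.inf' univ_nonempty (groupConv μ ν) :=
    le_inf' _ _ fun g _ => inf'_le_sum_mul (fun h => hε.trans (hν _)) (hw g)
  unfold spread at *
  linarith

variable [DecidableEq G]

lemma sum_groupConvPow {ν : G → ℝ} (hsum : ∑ x, ν x = 1) (k : ℕ) :
    ∑ g, groupConvPow ν k g = 1 := by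
  induction k with
  | zero => simp [groupConvPow]
  | succ k ih => rw [groupConvPow, sum_groupConv, ih, hsum, one_mul]

lemma spread_groupConvPow_le {ν : G → ℝ} {ε : ℝ} (hε : 0 ≤ ε) (hν : ∀ x, ε ≤ ν x)
    (hε1 : ε ≤ 1) (hsum : ∑ x, ν x = 1) (k : ℕ) :
    spread (groupConvPow ν k) ≤ (1 - ε) ^ k * spread (groupConvPow ν 0) := by
  induction k with
  | zero => simp
  | succ k ih =>
    calc spread (groupConvPow ν (k + 1)) ≤ (1 - ε) * spread (groupConvPow ν k) :=
          spread_groupConv_le _ hε hν hsum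
      _ ≤ (1 - ε) * ((1 - ε) ^ k * spread (groupConvPow ν 0)) := by gcongr
      _ = (1 - ε) ^ (k + 1) * spread (groupConvPow ν 0) := by ring

end Convolution

/-- Hadamard's card-shuffling convergence: the convolution powers of a strictly
positive probability distribution on a finite group converge to the uniform one. -/
theorem convolution_powers_tendsto_uniform {G : Type*} [Group G] [Fintype G] [DecidableEq G]
    (ν : G → ℝ) (hpos : ∀ g, 0 < ν g) (hsum : ∑ g, ν g = 1) :
    ∀ g : G, Tendsto (fun k => groupConvPow ν k g) atTop
      (nhds (1 / (Fintype.card G : ℝ))) := by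
  intro g
  set ε := univ.inf' univ_nonempty ν
  have hε : 0 < ε := (lt_inf'_iff _).2 fun x _ => hpos x
  have hν : ∀ x, ε ≤ ν x := inf'_univ_le ν
  have hε1 : ε ≤ 1 :=
    (hν 1).trans (hsum ▸ single_le_sum (fun x _ => (hpos x).le) (mem_univ 1))
  have hgeom : Tendsto (fun k => (1 - ε) ^ k * spread (groupConvPow ν 0)) atTop (nhds 0) := by
    simpa using (tendsto_pow_atTop_nhds_zero_of_lt_one (by linarith) (by linarith)).mul_const
      (spread (groupConvPow ν 0))
  have hdev :
      Tendsto (fun k => groupConvPow ν k g - 1 / (Fintype.card G : ℝ)) atTop (nhds 0) := by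
    refine squeeze_zero_norm (fun k => ?_) hgeom
    have := abs_sub_mean_le_spread (groupConvPow ν k) g
    rw [sum_groupConvPow hsum] at this
    exact this.trans (spread_groupConvPow_le hε.le hν hε1 hsum k)
  simpa using hdev.add_const (1 / (Fintype.card G : ℝ))
end

section
/- Uniqueness of the stationary distribution for a strictly positive stochastic matrix: if P is an n×n row-stochastic matrix with all entries strictly positive, and π, π' are probability row vectors with πP = π and π'P = π', then π = π'. -/
/-- Uniqueness of the stationary distribution of a strictly positive stochastic matrix. -/
theorem stationary_unique (n : ℕ) (hn : 1 ≤ n) (P : Matrix (Fin n) (Fin n) ℝ)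
    (hpos : ∀ i j, 0 < P i j) (hrow : ∀ i, ∑ j, P i j = 1)
    (pi pi' : Fin n → ℝ)
    (h0 : ∀ i, 0 ≤ pi i) (h1 : ∑ i, pi i = 1) (hfix : ∀ j, ∑ i, pi i * P i j = pi j)
    (h0' : ∀ i, 0 ≤ pi' i) (h1' : ∑ i, pi' i = 1) (hfix' : ∀ j, ∑ i, pi' i * P i j = pi' j) :
    pi = pi' := by
  set v : Fin n → ℝ := fun i => pi i - pi' i with hv
  have hvfix : ∀ j, ∑ i, v i * P i j = v j := by
    intro j
    simp only [hv, sub_mul, Finset.sum_sub_distrib, hfix j, hfix' j]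
  have hvsum : ∑ i, v i = 0 := by
    simp [hv, Finset.sum_sub_distrib, h1, h1']
  -- termwise inequality |v j| ≤ ∑ i |v i| P i j
  have hle : ∀ j, |v j| ≤ ∑ i, |v i| * P i j := by
    intro j
    rw [← hvfix j]
    refine (Finset.abs_sum_le_sum_abs _ _).trans ?_
    apply Finset.sum_le_sum
    intro i _
    rw [abs_mul, abs_of_pos (hpos i j)]
  -- both sides sum to the same thing
  have hsums : ∑ j, |v j| = ∑ j, ∑ i, |v i| * P i j := by
    rw [Finset.sum_comm]
    simp [← Finset.mul_sum, hrow]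
  have heq : ∀ j ∈ Finset.univ, |v j| = ∑ i, |v i| * P i j := by
    intro j _
    have := (Finset.sum_eq_sum_iff_of_le (fun j _ => hle j)).mp hsums j (Finset.mem_univ j)
    exact this
  -- pick a column
  have j0 : Fin n := ⟨0, hn⟩
  have hj0 := heq j0 (Finset.mem_univ j0)
  have hfixj0 := hvfix j0
  -- case on sign of v j0
  have hallsign : (∀ i, 0 ≤ v i) ∨ (∀ i, v i ≤ 0) := by
    rcases le_or_gt 0 (v j0) with hpos0 | hneg0
    · left
      have hz : ∑ i, (|v i| - v i) * P i j0 = 0 := by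
        have : ∑ i, (|v i| - v i) * P i j0
            = (∑ i, |v i| * P i j0) - ∑ i, v i * P i j0 := by
          simp [sub_mul, Finset.sum_sub_distrib]
        rw [this, hfixj0, ← hj0, abs_of_nonneg hpos0, sub_self]
      intro i
      have hterm : (|v i| - v i) * P i j0 = 0 := by
        have := (Finset.sum_eq_zero_iff_of_nonneg (fun i _ =>
          mul_nonneg (by simp [abs_nonneg, le_abs_self, sub_nonneg]) (hpos i j0).le)).mp hz i
          (Finset.mem_univ i)
        exact this
      have : |v i| - v i = 0 := by
        rcases mul_eq_zero.mp hterm with h | h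
        · exact h
        · exact absurd h (hpos i j0).ne'
      have habs : |v i| = v i := by linarith
      nlinarith [abs_nonneg (v i)]
    · right
      have hz : ∑ i, (|v i| + v i) * P i j0 = 0 := by
        have : ∑ i, (|v i| + v i) * P i j0
            = (∑ i, |v i| * P i j0) + ∑ i, v i * P i j0 := by
          simp [add_mul, Finset.sum_add_distrib]
        rw [this, hfixj0, ← hj0, abs_of_neg hneg0]
        ring
      intro i
      have hterm : (|v i| + v i) * P i j0 = 0 := by
        have := (Finset.sum_eq_zero_iff_of_nonneg (fun i _ =>
          mul_nonneg (by nlinarith [abs_nonneg (v i), neg_abs_le (v i)]) (hpos i j0).le)).mp hz i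
          (Finset.mem_univ i)
        exact this
      have : |v i| + v i = 0 := by
        rcases mul_eq_zero.mp hterm with h | h
        · exact h
        · exact absurd h (hpos i j0).ne'
      nlinarith [abs_nonneg (v i)]
  have hvzero : ∀ i, v i = 0 := by
    rcases hallsign with hp | hm
    · intro i
      exact (Finset.sum_eq_zero_iff_of_nonneg (fun i _ => hp i)).mp hvsum i (Finset.mem_univ i)
    · intro i
      have : ∑ i, -v i = 0 := by simp [hvsum]
      have := (Finset.sum_eq_zero_iff_of_nonneg (fun i _ => neg_nonneg.mpr (hm i))).mp this i
        (Finset.mem_univ i)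
      linarith
  funext i
  have := hvzero i
  simp only [hv] at this
  linarith
end

section
/- Monotone mixing of a positive stochastic matrix: if P is an n×n row-stochastic matrix with all entries positive, then for each column j, the sequence k ↦ maxᵢ (Pᵏ) i j − minᵢ (Pᵏ) i j is nonincreasing and converges to 0 as k → ∞. -/
open Filter

/-- Monotone mixing: for a strictly positive stochastic matrix, the column
oscillation of the powers is nonincreasing and tends to 0. -/
theorem monotone_mixing (n : ℕ) [NeZero n] (P : Matrix (Fin n) (Fin n) ℝ)
    (hpos : ∀ i j, 0 < P i j) (hrow : ∀ i, ∑ j, P i j = 1) (j : Fin n) :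
    (Antitone (fun k =>
      (Finset.univ.sup' Finset.univ_nonempty (fun i => (P ^ k) i j)) -
      (Finset.univ.inf' Finset.univ_nonempty (fun i => (P ^ k) i j)))) ∧
    Tendsto (fun k =>
      (Finset.univ.sup' Finset.univ_nonempty (fun i => (P ^ k) i j)) -
      (Finset.univ.inf' Finset.univ_nonempty (fun i => (P ^ k) i j)))
      atTop (nhds 0) := by
  classical
  set M : ℕ → ℝ := fun k =>
    Finset.univ.sup' Finset.univ_nonempty (fun i => (P ^ k) i j) with hMdef
  set m : ℕ → ℝ := fun k =>
    Finset.univ.inf' Finset.univ_nonempty (fun i => (P ^ k) i j) with hmdef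
  have hstep : ∀ (k : ℕ) (i : Fin n), (P ^ (k+1)) i j = ∑ l, P i l * (P ^ k) l j := by
    intro k i
    rw [pow_succ', Matrix.mul_apply]
  have hMle : ∀ k i, (P ^ k) i j ≤ M k := by
    intro k i; exact Finset.le_sup' (fun i => (P ^ k) i j) (Finset.mem_univ i)
  have hmle : ∀ k i, m k ≤ (P ^ k) i j := by
    intro k i; exact Finset.inf'_le (fun i => (P ^ k) i j) (Finset.mem_univ i)
  have hmM : ∀ k, m k ≤ M k := fun k =>
    le_trans (hmle k (Classical.arbitrary _)) (hMle k (Classical.arbitrary _))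
  -- antitone bounds
  have hMmono : ∀ k, M (k+1) ≤ M k := by
    intro k
    apply Finset.sup'_le
    intro i _
    rw [hstep]
    calc ∑ l, P i l * (P ^ k) l j ≤ ∑ l, P i l * M k := by
          apply Finset.sum_le_sum
          intro l _
          exact mul_le_mul_of_nonneg_left (hMle k l) (hpos i l).le
      _ = M k := by rw [← Finset.sum_mul, hrow, one_mul]
  have hmmono : ∀ k, m k ≤ m (k+1) := by
    intro k
    apply Finset.le_inf'
    intro i _
    rw [hstep]
    calc m k = ∑ l, P i l * m k := by rw [← Finset.sum_mul, hrow, one_mul]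
      _ ≤ ∑ l, P i l * (P ^ k) l j := by
          apply Finset.sum_le_sum
          intro l _
          exact mul_le_mul_of_nonneg_left (hmle k l) (hpos i l).le
  -- minimal entry
  set ε : ℝ := Finset.univ.inf' Finset.univ_nonempty
      (fun p : Fin n × Fin n => P p.1 p.2) with hεdef
  have hεle : ∀ i l, ε ≤ P i l := fun i l =>
    Finset.inf'_le (fun p : Fin n × Fin n => P p.1 p.2) (Finset.mem_univ (i, l))
  have hεpos : 0 < ε := by
    obtain ⟨p, -, hp⟩ := Finset.exists_mem_eq_inf' (Finset.univ_nonempty)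
      (fun p : Fin n × Fin n => P p.1 p.2)
    rw [hεdef, hp]; exact hpos p.1 p.2
  set q : ℝ := 1 - n * ε with hqdef
  have hnε1 : (n : ℝ) * ε ≤ 1 := by
    have i0 : Fin n := Classical.arbitrary _
    calc (n : ℝ) * ε = ∑ _l : Fin n, ε := by
          rw [Finset.sum_const, Finset.card_univ, Fintype.card_fin, nsmul_eq_mul]
      _ ≤ ∑ l, P i0 l := Finset.sum_le_sum (fun l _ => hεle i0 l)
      _ = 1 := hrow i0
  have hq0 : 0 ≤ q := by simp [hqdef]; linarith
  have hq1 : q < 1 := by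
    have hn : 0 < (n : ℝ) := by
      exact_mod_cast Nat.pos_of_ne_zero (NeZero.ne n)
    have : 0 < (n : ℝ) * ε := mul_pos hn hεpos
    simp [hqdef]; linarith
  -- contraction
  have hcontr : ∀ k, M (k+1) - m (k+1) ≤ q * (M k - m k) := by
    intro k
    obtain ⟨i, -, hi⟩ := Finset.exists_mem_eq_sup' (Finset.univ_nonempty)
      (fun i => (P ^ (k+1)) i j)
    obtain ⟨i', -, hi'⟩ := Finset.exists_mem_eq_inf' (Finset.univ_nonempty)
      (fun i => (P ^ (k+1)) i j)
    have hdiff : M (k+1) - m (k+1) = ∑ l, (P i l - P i' l) * (P ^ k) l j := by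
      rw [hMdef, hmdef]
      simp only
      rw [hi, hi', hstep, hstep, ← Finset.sum_sub_distrib]
      congr 1; funext l; ring
    set S : Finset (Fin n) := Finset.univ.filter (fun l => P i' l ≤ P i l) with hSdef
    set c : ℝ := ∑ l ∈ S, (P i l - P i' l) with hcdef
    have htot : ∑ l, (P i l - P i' l) = 0 := by
      rw [Finset.sum_sub_distrib, hrow, hrow, sub_self]
    have hcompl : ∑ l ∈ Finset.univ.filter (fun l => ¬ P i' l ≤ P i l),
        (P i l - P i' l) = -c := by
      have := Finset.sum_filter_add_sum_filter_not Finset.univ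
        (fun l => P i' l ≤ P i l) (fun l => P i l - P i' l)
      rw [htot] at this
      rw [hcdef, hSdef]; linarith
    have hbound : M (k+1) - m (k+1) ≤ c * (M k - m k) := by
      rw [hdiff, ← Finset.sum_filter_add_sum_filter_not Finset.univ
        (fun l => P i' l ≤ P i l) (fun l => (P i l - P i' l) * (P ^ k) l j)]
      have h1 : ∑ l ∈ Finset.univ.filter (fun l => P i' l ≤ P i l),
          (P i l - P i' l) * (P ^ k) l j ≤ c * M k := by
        rw [hcdef, Finset.sum_mul]
        apply Finset.sum_le_sum
        intro l hl
        have hl' : P i' l ≤ P i l := (Finset.mem_filter.mp hl).2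
        exact mul_le_mul_of_nonneg_left (hMle k l) (by linarith)
      have h2 : ∑ l ∈ Finset.univ.filter (fun l => ¬ P i' l ≤ P i l),
          (P i l - P i' l) * (P ^ k) l j ≤ -c * m k := by
        rw [← hcompl, Finset.sum_mul]
        apply Finset.sum_le_sum
        intro l hl
        have hl' : ¬ P i' l ≤ P i l := (Finset.mem_filter.mp hl).2
        have : P i l - P i' l ≤ 0 := by linarith [lt_of_not_ge hl']
        exact mul_le_mul_of_nonpos_left (hmle k l) this
      calc _ ≤ c * M k + -c * m k := add_le_add h1 h2
        _ = c * (M k - m k) := by ring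
    have hcq : c ≤ q := by
      have h1 : ∑ l ∈ S, P i' l ≥ ε * S.card := by
        calc ∑ l ∈ S, P i' l ≥ ∑ _l ∈ S, ε := Finset.sum_le_sum (fun l _ => hεle i' l)
          _ = ε * S.card := by rw [Finset.sum_const, nsmul_eq_mul, mul_comm]
      have h2 : ∑ l ∈ Sᶜ, P i l ≥ ε * Sᶜ.card := by
        calc ∑ l ∈ Sᶜ, P i l ≥ ∑ _l ∈ Sᶜ, ε := Finset.sum_le_sum (fun l _ => hεle i l)
          _ = ε * Sᶜ.card := by rw [Finset.sum_const, nsmul_eq_mul, mul_comm]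
      have h3 : ∑ l ∈ S, P i l + ∑ l ∈ Sᶜ, P i l = 1 := by
        rw [Finset.sum_add_sum_compl, hrow]
      have h4 : (S.card : ℝ) + (Sᶜ.card : ℝ) = n := by
        have := Finset.card_add_card_compl S
        rw [Fintype.card_fin] at this
        exact_mod_cast this
      have : c = ∑ l ∈ S, P i l - ∑ l ∈ S, P i' l := by
        rw [hcdef, Finset.sum_sub_distrib]
      nlinarith [h1, h2, h3, h4]
    have hf0 : 0 ≤ M k - m k := by linarith [hmM k]
    calc M (k+1) - m (k+1) ≤ c * (M k - m k) := hbound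
      _ ≤ q * (M k - m k) := mul_le_mul_of_nonneg_right hcq hf0
  have hanti : Antitone (fun k => M k - m k) := by
    apply antitone_nat_of_succ_le
    intro k
    exact sub_le_sub (hMmono k) (hmmono k)
  refine ⟨hanti, ?_⟩
  have hf0 : ∀ k, 0 ≤ M k - m k := fun k => by linarith [hmM k]
  have hgeo : ∀ k, M k - m k ≤ (M 0 - m 0) * q ^ k := by
    intro k
    induction k with
    | zero => simp
    | succ k ih =>
      calc M (k+1) - m (k+1) ≤ q * (M k - m k) := hcontr k
        _ ≤ q * ((M 0 - m 0) * q ^ k) := mul_le_mul_of_nonneg_left ih hq0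
        _ = (M 0 - m 0) * q ^ (k+1) := by ring
  have hq : Tendsto (fun k => (M 0 - m 0) * q ^ k) atTop (nhds 0) := by
    have := tendsto_pow_atTop_nhds_zero_of_lt_one hq0 hq1
    simpa using this.const_mul (M 0 - m 0)
  exact squeeze_zero hf0 hgeo hq
end

section
/- Powers of a positive stochastic matrix converge to a rank-one matrix: if P is an n×n row-stochastic matrix with all entries positive, then there is a probability row vector π such that Pᵏ converges entrywise to the matrix whose every row equals π. -/
open Filter

open Finset

/-- Powers of a strictly positive stochastic matrix converge entrywise to a
rank-one matrix with all rows equal to a probability vector. -/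
theorem powers_tendsto_rank_one (n : ℕ) (hn : 1 ≤ n) (P : Matrix (Fin n) (Fin n) ℝ)
    (hpos : ∀ i j, 0 < P i j) (hrow : ∀ i, ∑ j, P i j = 1) :
    ∃ pi : Fin n → ℝ, (∀ i, 0 ≤ pi i) ∧ (∑ i, pi i = 1) ∧
      ∀ i j, Tendsto (fun k => (P ^ k) i j) atTop (nhds (pi j)) := by
  have i0 : Fin n := ⟨0, hn⟩
  have hne : (univ : Finset (Fin n)).Nonempty := ⟨i0, mem_univ _⟩
  -- minimal entry
  set δ : ℝ := univ.inf' hne (fun i => univ.inf' hne (fun l => P i l)) with hδdef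
  have hδle : ∀ i l, δ ≤ P i l := fun i l =>
    le_trans (inf'_le _ (mem_univ i)) (inf'_le _ (mem_univ l))
  have hδpos : 0 < δ := by
    rw [hδdef, Finset.lt_inf'_iff]
    intro i _
    rw [Finset.lt_inf'_iff]
    exact fun l _ => hpos i l
  set θ : ℝ := 1 - n * δ with hθdef
  have hnδ : (n : ℝ) * δ ≤ 1 := by
    have : ∑ l : Fin n, δ ≤ ∑ l, P i0 l := Finset.sum_le_sum (fun l _ => hδle i0 l)
    simpa [Finset.sum_const, Finset.card_univ, hrow i0, mul_comm] using this
  have hθ0 : 0 ≤ θ := by simp [hθdef]; linarith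
  have hθ1 : θ < 1 := by
    have : 0 < (n : ℝ) * δ := by positivity
    simp [hθdef]; linarith
  -- recursion
  have hrec : ∀ (k : ℕ) i j, (P ^ (k + 1)) i j = ∑ l, P i l * (P ^ k) l j := by
    intro k i j
    rw [pow_succ']
    simp [Matrix.mul_apply]
  -- entries nonneg, row sums one
  have hpnn : ∀ (k : ℕ) i j, 0 ≤ (P ^ k) i j := by
    intro k
    induction k with
    | zero => intro i j; simp [Matrix.one_apply]; positivity
    | succ k ih =>
      intro i j
      rw [hrec]
      exact Finset.sum_nonneg fun l _ => mul_nonneg (hpos i l).le (ih l j)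
  have hpsum : ∀ (k : ℕ) i, ∑ j, (P ^ k) i j = 1 := by
    intro k
    induction k with
    | zero => intro i; simp [Matrix.one_apply]
    | succ k ih =>
      intro i
      simp only [hrec]
      rw [Finset.sum_comm]
      simp only [← Finset.mul_sum, ih, mul_one, hrow i]
  -- column maxima and minima
  set M : ℕ → Fin n → ℝ := fun k j => univ.sup' hne (fun i => (P ^ k) i j) with hMdef
  set m : ℕ → Fin n → ℝ := fun k j => univ.inf' hne (fun i => (P ^ k) i j) with hmdef
  have hmle : ∀ k i j, m k j ≤ (P ^ k) i j := fun k i j => inf'_le (fun i => (P ^ k) i j) (mem_univ i)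
  have hleM : ∀ k i j, (P ^ k) i j ≤ M k j := fun k i j => le_sup' (fun i => (P ^ k) i j) (mem_univ i)
  have hmM : ∀ k j, m k j ≤ M k j := fun k j => le_trans (hmle k i0 j) (hleM k i0 j)
  -- M antitone, m monotone (in k)
  have hMsucc : ∀ k j, M (k + 1) j ≤ M k j := by
    intro k j
    apply Finset.sup'_le
    intro i _
    rw [hrec]
    calc ∑ l, P i l * (P ^ k) l j ≤ ∑ l, P i l * M k j :=
          Finset.sum_le_sum fun l _ => mul_le_mul_of_nonneg_left (hleM k l j) (hpos i l).le
      _ = M k j := by rw [← Finset.sum_mul, hrow i, one_mul]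
  have hmsucc : ∀ k j, m k j ≤ m (k + 1) j := by
    intro k j
    apply Finset.le_inf'
    intro i _
    rw [hrec]
    calc m k j = ∑ l, P i l * m k j := by rw [← Finset.sum_mul, hrow i, one_mul]
      _ ≤ ∑ l, P i l * (P ^ k) l j :=
          Finset.sum_le_sum fun l _ => mul_le_mul_of_nonneg_left (hmle k l j) (hpos i l).le
  -- the contraction inequality
  have hgap : ∀ k j, M (k + 1) j - m (k + 1) j ≤ θ * (M k j - m k j) := by
    intro k j
    obtain ⟨i, _, hi⟩ := Finset.exists_mem_eq_sup' hne (fun i => (P ^ (k+1)) i j)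
    obtain ⟨i', _, hi'⟩ := Finset.exists_mem_eq_inf' hne (fun i => (P ^ (k+1)) i j)
    have hMi : M (k + 1) j = (P ^ (k+1)) i j := hi
    have hmi : m (k + 1) j = (P ^ (k+1)) i' j := hi'
    rw [hMi, hmi, hrec, hrec]
    set S : ℝ := ∑ l, min (P i l) (P i' l) with hSdef
    have hSδ : (n : ℝ) * δ ≤ S := by
      have : ∑ l : Fin n, δ ≤ S :=
        Finset.sum_le_sum (fun l _ => le_min (hδle i l) (hδle i' l))
      simpa [Finset.sum_const, Finset.card_univ, mul_comm] using this
    have h1 : ∑ l, P i l * (P ^ k) l j - ∑ l, P i' l * (P ^ k) l j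
        ≤ (1 - S) * M k j - (1 - S) * m k j := by
      have hA : ∑ l, P i l * (P ^ k) l j ≤ ∑ l, min (P i l) (P i' l) * (P ^ k) l j
          + (1 - S) * M k j := by
        have : ∑ l, (P i l - min (P i l) (P i' l)) * (P ^ k) l j
            ≤ ∑ l, (P i l - min (P i l) (P i' l)) * M k j :=
          Finset.sum_le_sum fun l _ => mul_le_mul_of_nonneg_left (hleM k l j)
            (by simp [sub_nonneg, min_le_left])
        simp only [sub_mul] at this
        rw [Finset.sum_sub_distrib, Finset.sum_sub_distrib] at this
        have e1 : ∑ l, P i l * M k j = M k j := by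
          rw [← Finset.sum_mul, hrow i, one_mul]
        have e2 : ∑ l, min (P i l) (P i' l) * M k j = S * M k j := by
          rw [← Finset.sum_mul]
        rw [sub_mul, one_mul]
        linarith
      have hB : ∑ l, min (P i l) (P i' l) * (P ^ k) l j + (1 - S) * m k j
          ≤ ∑ l, P i' l * (P ^ k) l j := by
        have : ∑ l, (P i' l - min (P i l) (P i' l)) * m k j
            ≤ ∑ l, (P i' l - min (P i l) (P i' l)) * (P ^ k) l j :=
          Finset.sum_le_sum fun l _ => mul_le_mul_of_nonneg_left (hmle k l j)
            (by simp [sub_nonneg, min_le_right])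
        simp only [sub_mul] at this
        rw [Finset.sum_sub_distrib, Finset.sum_sub_distrib] at this
        have e1 : ∑ l, P i' l * m k j = m k j := by
          rw [← Finset.sum_mul, hrow i', one_mul]
        have e2 : ∑ l, min (P i l) (P i' l) * m k j = S * m k j := by
          rw [← Finset.sum_mul]
        rw [sub_mul, one_mul]
        linarith
      linarith
    have h2 : (1 - S) * M k j - (1 - S) * m k j ≤ θ * (M k j - m k j) := by
      rw [← mul_sub]
      exact mul_le_mul_of_nonneg_right (by rw [hθdef]; linarith) (by linarith [hmM k j])
    linarith
  -- geometric bound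
  have hgapk : ∀ j k, M k j - m k j ≤ θ ^ k * (M 0 j - m 0 j) := by
    intro j k
    induction k with
    | zero => simp
    | succ k ih =>
      calc M (k+1) j - m (k+1) j ≤ θ * (M k j - m k j) := hgap k j
        _ ≤ θ * (θ ^ k * (M 0 j - m 0 j)) := mul_le_mul_of_nonneg_left ih hθ0
        _ = θ ^ (k+1) * (M 0 j - m 0 j) := by ring
  -- M converges
  have hManti : ∀ j, Antitone (fun k => M k j) := fun j =>
    antitone_nat_of_succ_le (fun k => hMsucc k j)
  have hmmono : ∀ j, Monotone (fun k => m k j) := fun j =>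
    monotone_nat_of_le_succ (fun k => hmsucc k j)
  have hMbdd : ∀ j, BddBelow (Set.range (fun k => M k j)) := by
    intro j
    refine ⟨m 0 j, ?_⟩
    rintro x ⟨k, rfl⟩
    exact le_trans (hmmono j (Nat.zero_le k)) (hmM k j)
  have hMtend : ∀ j, Tendsto (fun k => M k j) atTop (nhds (⨅ k, M k j)) := fun j =>
    tendsto_atTop_ciInf (hManti j) (hMbdd j)
  refine ⟨fun j => ⨅ k, M k j, ?_, ?_, ?_⟩
  case refine_3 =>
    intro i j
    have hθk : Tendsto (fun k : ℕ => θ ^ k * (M 0 j - m 0 j)) atTop (nhds 0) := by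
      simpa using (tendsto_pow_atTop_nhds_zero_of_lt_one hθ0 hθ1).mul_const (M 0 j - m 0 j)
    have hlow : Tendsto (fun k => M k j - θ ^ k * (M 0 j - m 0 j)) atTop
        (nhds (⨅ k, M k j)) := by
      simpa using (hMtend j).sub hθk
    refine tendsto_of_tendsto_of_tendsto_of_le_of_le hlow (hMtend j) ?_ ?_
    · intro k
      have h1 := hgapk j k
      have h2 := hmle k i j
      dsimp only
      linarith
    · intro k; exact hleM k i j
  case refine_1 =>
    intro j
    have : Tendsto (fun k => (P ^ k) i0 j) atTop (nhds (⨅ k, M k j)) := by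
      -- reuse squeeze as above
      have hθk : Tendsto (fun k : ℕ => θ ^ k * (M 0 j - m 0 j)) atTop (nhds 0) := by
        simpa using (tendsto_pow_atTop_nhds_zero_of_lt_one hθ0 hθ1).mul_const (M 0 j - m 0 j)
      have hlow : Tendsto (fun k => M k j - θ ^ k * (M 0 j - m 0 j)) atTop
          (nhds (⨅ k, M k j)) := by
        simpa using (hMtend j).sub hθk
      refine tendsto_of_tendsto_of_tendsto_of_le_of_le hlow (hMtend j) ?_ ?_
      · intro k
        have h1 := hgapk j k
        have h2 := hmle k i0 j
        dsimp only
        linarith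
      · intro k; exact hleM k i0 j
    exact ge_of_tendsto' this (fun k => hpnn k i0 j)
  case refine_2 =>
    have h1 : Tendsto (fun k => ∑ j, (P ^ k) i0 j) atTop (nhds (∑ j, ⨅ k, M k j)) := by
      apply tendsto_finset_sum
      intro j _
      have hθk : Tendsto (fun k : ℕ => θ ^ k * (M 0 j - m 0 j)) atTop (nhds 0) := by
        simpa using (tendsto_pow_atTop_nhds_zero_of_lt_one hθ0 hθ1).mul_const (M 0 j - m 0 j)
      have hlow : Tendsto (fun k => M k j - θ ^ k * (M 0 j - m 0 j)) atTop
          (nhds (⨅ k, M k j)) := by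
        simpa using (hMtend j).sub hθk
      refine tendsto_of_tendsto_of_tendsto_of_le_of_le hlow (hMtend j) ?_ ?_
      · intro k
        have h1 := hgapk j k
        have h2 := hmle k i0 j
        dsimp only
        linarith
      · intro k; exact hleM k i0 j
    have h2 : Tendsto (fun k => ∑ j, (P ^ k) i0 j) atTop (nhds 1) := by
      simp only [hpsum]
      exact tendsto_const_nhds
    exact (tendsto_nhds_unique h1 h2)
end

section
/- Doeblin-type bound from below: if P is an n×n row-stochastic matrix with P i j ≥ ε for all i, j (with 0 < ε and nε ≤ 1), then for all k ≥ 1 and all i, i', j: |(Pᵏ) i j − (Pᵏ) i' j| ≤ (1 − nε)ᵏ. -/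
lemma doeblin_key (n : ℕ) (hn : 1 ≤ n) (ε C : ℝ) (hC : 0 ≤ C)
    (p q f : Fin n → ℝ) (hp : ∀ l, ε ≤ p l) (hq : ∀ l, ε ≤ q l)
    (hps : ∑ l, p l = 1) (hqs : ∑ l, q l = 1)
    (hf : ∀ l l', f l - f l' ≤ C) :
    ∑ l, p l * f l - ∑ l, q l * f l ≤ (1 - (n : ℝ) * ε) * C := by
  have hne : Nonempty (Fin n) := Fin.pos_iff_nonempty.mp hn
  set m : Fin n → ℝ := fun l => min (p l) (q l) with hm
  set S : ℝ := ∑ l, m l with hS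
  have hSε : (n : ℝ) * ε ≤ S := by
    have : ∑ _l : Fin n, ε ≤ S := by
      apply Finset.sum_le_sum
      intro l _
      exact le_min (hp l) (hq l)
    simpa [mul_comm] using this
  have hS1 : S ≤ 1 := by
    rw [← hps]
    apply Finset.sum_le_sum
    intro l _
    exact min_le_left _ _
  obtain ⟨a, _, ha⟩ := Finset.exists_max_image (Finset.univ : Finset (Fin n)) f
    Finset.univ_nonempty
  obtain ⟨b, _, hb⟩ := Finset.exists_min_image (Finset.univ : Finset (Fin n)) f
    Finset.univ_nonempty
  have h1 : ∑ l, (p l - m l) * f l ≤ (1 - S) * f a := by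
    have : ∑ l, (p l - m l) * f l ≤ ∑ l, (p l - m l) * f a := by
      apply Finset.sum_le_sum
      intro l _
      exact mul_le_mul_of_nonneg_left (ha l (Finset.mem_univ l))
        (by simp [hm, min_le_left])
    calc ∑ l, (p l - m l) * f l ≤ ∑ l, (p l - m l) * f a := this
      _ = (1 - S) * f a := by
        rw [← Finset.sum_mul, Finset.sum_sub_distrib, hps]
  have h2 : (1 - S) * f b ≤ ∑ l, (q l - m l) * f l := by
    have : ∑ l, (q l - m l) * f b ≤ ∑ l, (q l - m l) * f l := by
      apply Finset.sum_le_sum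
      intro l _
      exact mul_le_mul_of_nonneg_left (hb l (Finset.mem_univ l))
        (by simp [hm, min_le_right])
    have heqb : ∑ l, (q l - m l) * f b = (1 - S) * f b := by
      rw [← Finset.sum_mul, Finset.sum_sub_distrib, hqs]
    linarith
  have heq : ∑ l, p l * f l - ∑ l, q l * f l
      = ∑ l, (p l - m l) * f l - ∑ l, (q l - m l) * f l := by
    simp [sub_mul, Finset.sum_sub_distrib]
  rw [heq]
  calc ∑ l, (p l - m l) * f l - ∑ l, (q l - m l) * f l
      ≤ (1 - S) * f a - (1 - S) * f b := by linarith
    _ = (1 - S) * (f a - f b) := by ring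
    _ ≤ (1 - S) * C := by
        apply mul_le_mul_of_nonneg_left (hf a b) (by linarith)
    _ ≤ (1 - (n : ℝ) * ε) * C := by
        apply mul_le_mul_of_nonneg_right _ hC
        linarith

/-- Doeblin bound: rows of the powers of a stochastic matrix with entries
bounded below by ε differ by at most `(1 - nε)^k`. -/
theorem doeblin_bound (n : ℕ) (hn : 1 ≤ n) (ε : ℝ) (hε : 0 < ε)
    (hnε : (n : ℝ) * ε ≤ 1) (P : Matrix (Fin n) (Fin n) ℝ)
    (hij : ∀ i j, ε ≤ P i j) (hrow : ∀ i, ∑ j, P i j = 1) :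
    ∀ k : ℕ, 1 ≤ k → ∀ i i' j, |(P ^ k) i j - (P ^ k) i' j| ≤ (1 - (n : ℝ) * ε) ^ k := by
  have h0 : (0:ℝ) ≤ 1 - (n : ℝ) * ε := by linarith
  have main : ∀ k : ℕ, ∀ i i' j, |(P ^ k) i j - (P ^ k) i' j| ≤ (1 - (n : ℝ) * ε) ^ k := by
    intro k
    induction k with
    | zero =>
      intro i i' j
      simp [Matrix.one_apply]
      by_cases h1 : i = j <;> by_cases h2 : i' = j <;>
        simp [h1, h2, abs_le] <;> norm_num
    | succ k ih =>
      intro i i' j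
      have hC : (0:ℝ) ≤ (1 - (n : ℝ) * ε) ^ k := pow_nonneg h0 k
      have hpow : P ^ (k + 1) = P * P ^ k := pow_succ' P k
      have happ : ∀ a, (P ^ (k+1)) a j = ∑ l, P a l * (P ^ k) l j := by
        intro a; rw [hpow, Matrix.mul_apply]
      rw [happ i, happ i', pow_succ']
      rw [abs_sub_le_iff]
      constructor
      · exact doeblin_key n hn ε _ hC (P i) (P i') (fun l => (P ^ k) l j)
          (hij i) (hij i') (hrow i) (hrow i')
          (fun l l' => (abs_le.mp (ih l l' j)).2 |>.trans_eq' (by ring) |>.trans (le_refl _)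
            |>.trans (le_refl _)) |>.trans_eq (by ring) |>.trans (le_refl _)
      · exact doeblin_key n hn ε _ hC (P i') (P i) (fun l => (P ^ k) l j)
          (hij i') (hij i) (hrow i') (hrow i)
          (fun l l' => (abs_le.mp (ih l l' j)).2) |>.trans_eq rfl
  intro k _ i i' j
  exact main k i i' j
end
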